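/- arXiv:1801.08675 — 2 statements merged into one kernel-verified Lean document; each statement's English description precedes it below -/
import Mathlib

section
/- Let f : ℝ → ℝ be a Schwartz function (smooth with all derivatives rapidly decreasing), let α be a natural number, and let a be a real parameter. Then sup_{x ∈ ℝ} (1+x^2)^α |f(x+a) - f(x) - f'(x)·a - f''(x)·a^2/2| = O(a^3) as a → 0. -/
/-!
Taylor's formula bounds the remainder at `x` by `|a|³` times the supremum of `|f'''|` on
`[x - |a|, x + |a|]`. For `|t| ≤ 1`, Peetre's inequality `1 + x² ≤ 4 (1 + (x + t)²)` moves the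
weight `(1 + x²)^α` to the points where `f'''` is evaluated, and there it is absorbed by the
rapid decay of `f'''`.
-/

open scoped SchwartzMap

theorem abs_le_mul_abs_pow_succ_of_hasDerivAt {φ φ' : ℝ → ℝ} {r K : ℝ} {n : ℕ}
    (hK : 0 ≤ K) (hφ₀ : φ 0 = 0) (hφ : ∀ u, |u| ≤ r → HasDerivAt φ (φ' u) u)
    (hφ' : ∀ u, |u| ≤ r → |φ' u| ≤ K * |u| ^ n) {t : ℝ} (ht : |t| ≤ r) :
    |φ t| ≤ K * |t| ^ (n + 1) := by
  have hball : ∀ u ∈ Metric.closedBall (0 : ℝ) |t|, |u| ≤ |t| := by simp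
  have h := (convex_closedBall (0 : ℝ) |t|).norm_image_sub_le_of_norm_hasDerivWithin_le
    (f := φ) (C := K * |t| ^ n) (y := t)
    (fun u hu => (hφ u ((hball u hu).trans ht)).hasDerivWithinAt)
    (fun u hu => (hφ' u ((hball u hu).trans ht)).trans <|
      mul_le_mul_of_nonneg_left (pow_le_pow_left₀ (abs_nonneg u) (hball u hu) n) hK)
    (Metric.mem_closedBall_self (abs_nonneg t)) (by simp)
  simpa [hφ₀, Real.norm_eq_abs, pow_succ, mul_assoc] using h

theorem abs_taylor_two_remainder_le {g : ℝ → ℝ} (hg : ContDiff ℝ 3 g) {x r M : ℝ}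
    (hM : ∀ t, |t| ≤ r → |iteratedDeriv 3 g (x + t)| ≤ M) {a : ℝ} (ha : |a| ≤ r) :
    |g (x + a) - g x - deriv g x * a - iteratedDeriv 2 g x * a ^ 2 / 2| ≤ M * |a| ^ 3 := by
  have hM0 : 0 ≤ M := (abs_nonneg _).trans (hM 0 (by simpa using (abs_nonneg a).trans ha))
  have hderiv (m : ℕ) (hm : m < 3) (u : ℝ) :
      HasDerivAt (fun t => iteratedDeriv m g (x + t)) (iteratedDeriv (m + 1) g (x + u)) u := by
    rw [iteratedDeriv_succ]
    exact (hg.differentiable_iteratedDeriv m (by exact_mod_cast hm) _).hasDerivAt.comp_const_add x u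
  have remainder₂ (t : ℝ) (ht : |t| ≤ r) :
      |iteratedDeriv 2 g (x + t) - iteratedDeriv 2 g x| ≤ M * |t| ^ 1 :=
    abs_le_mul_abs_pow_succ_of_hasDerivAt (n := 0)
      (φ := fun u => iteratedDeriv 2 g (x + u) - iteratedDeriv 2 g x) hM0 (by simp)
      (fun u _ => (hderiv 2 (by norm_num) u).sub_const _)
      (fun u hu => by simpa using hM u hu) ht
  have remainder₁ (t : ℝ) (ht : |t| ≤ r) :
      |deriv g (x + t) - deriv g x - iteratedDeriv 2 g x * t| ≤ M * |t| ^ 2 :=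
    abs_le_mul_abs_pow_succ_of_hasDerivAt (n := 1)
      (φ := fun u => deriv g (x + u) - deriv g x - iteratedDeriv 2 g x * u) hM0 (by simp)
      (fun u _ => by
        simpa [iteratedDeriv_one] using ((hderiv 1 (by norm_num) u).sub_const _).fun_sub
          ((hasDerivAt_id u).const_mul (iteratedDeriv 2 g x)))
      remainder₂ ht
  refine abs_le_mul_abs_pow_succ_of_hasDerivAt (n := 2)
    (φ := fun u => g (x + u) - g x - deriv g x * u - iteratedDeriv 2 g x * u ^ 2 / 2)
    hM0 (by simp) (fun u _ => ?_) remainder₁ ha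
  have := (((hderiv 0 (by norm_num) u).sub_const (g x)).fun_sub
    ((hasDerivAt_id u).const_mul (deriv g x))).fun_sub
    (((hasDerivAt_pow 2 u).const_mul (iteratedDeriv 2 g x)).div_const 2)
  simp only [iteratedDeriv_zero, zero_add, iteratedDeriv_one, id] at this
  exact this.congr_deriv (by ring)

theorem one_add_sq_le_two_mul_one_add_sq_mul_one_add_sq (x t : ℝ) :
    1 + x ^ 2 ≤ 2 * (1 + t ^ 2) * (1 + (x + t) ^ 2) := by
  nlinarith [sq_nonneg (x + 2 * t), sq_nonneg (t * (x + t))]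

theorem SchwartzMap.exists_one_add_sq_pow_mul_norm_iteratedDeriv_le {F : Type*}
    [NormedAddCommGroup F] [NormedSpace ℝ F] (f : 𝓢(ℝ, F)) (k n : ℕ) :
    ∃ D, ∀ y : ℝ, (1 + y ^ 2) ^ k * ‖iteratedDeriv n f y‖ ≤ D := by
  refine ⟨2 ^ (2 * k) * (Finset.Iic (2 * k, n)).sup (fun m => SchwartzMap.seminorm ℝ m.1 m.2) f,
    fun y => ?_⟩
  have h := one_add_le_sup_seminorm_apply (𝕜 := ℝ) (m := (2 * k, n)) le_rfl le_rfl f y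
  rw [norm_iteratedFDeriv_eq_norm_iteratedDeriv, pow_mul] at h
  refine le_trans (mul_le_mul_of_nonneg_right ?_ (norm_nonneg _)) h
  gcongr
  rw [Real.norm_eq_abs]
  nlinarith [abs_nonneg y, sq_abs y]

/-- Taylor remainder bound for Schwartz functions, uniform in `x`, is `O(a^3)` as `a → 0`. -/
theorem schwartz_taylor_remainder_bigO (f : SchwartzMap ℝ ℝ) (α : ℕ) :
    ∃ C δ : ℝ, 0 < C ∧ 0 < δ ∧ ∀ a : ℝ, |a| ≤ δ → ∀ x : ℝ,
      (1 + x^2)^α *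
        |f (x + a) - f x - deriv (⇑f) x * a - iteratedDeriv 2 (⇑f) x * a^2 / 2|
        ≤ C * |a|^3 := by
  obtain ⟨D, hD⟩ := f.exists_one_add_sq_pow_mul_norm_iteratedDeriv_le α 3
  have hD₀ : 0 ≤ D := (mul_nonneg (by positivity) (norm_nonneg _)).trans (hD 0)
  refine ⟨4 ^ α * D + 1, 1, by positivity, one_pos, fun a ha x => ?_⟩
  have hw : 0 < (1 + x ^ 2) ^ α := by positivity
  have hM (t : ℝ) (ht : |t| ≤ 1) :
      |iteratedDeriv 3 f (x + t)| ≤ 4 ^ α * D / (1 + x ^ 2) ^ α := by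
    have hweight : 1 + x ^ 2 ≤ 4 * (1 + (x + t) ^ 2) := by
      have ht2 : t ^ 2 ≤ 1 := (sq_le_one_iff_abs_le_one t).2 ht
      nlinarith [one_add_sq_le_two_mul_one_add_sq_mul_one_add_sq x t,
        mul_nonneg (sub_nonneg.2 ht2) (sq_nonneg (x + t))]
    rw [le_div_iff₀ hw]
    calc |iteratedDeriv 3 f (x + t)| * (1 + x ^ 2) ^ α
        ≤ |iteratedDeriv 3 f (x + t)| * (4 * (1 + (x + t) ^ 2)) ^ α := by gcongr
      _ = 4 ^ α * ((1 + (x + t) ^ 2) ^ α * ‖iteratedDeriv 3 f (x + t)‖) := by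
        rw [mul_pow, Real.norm_eq_abs]; ring
      _ ≤ 4 ^ α * D := by gcongr; exact hD _
  calc (1 + x ^ 2) ^ α * |f (x + a) - f x - deriv f x * a - iteratedDeriv 2 f x * a ^ 2 / 2|
      ≤ (1 + x ^ 2) ^ α * (4 ^ α * D / (1 + x ^ 2) ^ α * |a| ^ 3) := by
        gcongr
        exact abs_taylor_two_remainder_le (f.smooth 3) hM ha
    _ = 4 ^ α * D * |a| ^ 3 := by field_simp
    _ ≤ (4 ^ α * D + 1) * |a| ^ 3 := by gcongr; linarith
end

section
/- For fixed z ∈ ℝ, as θ → 0 the function P_θ(σ) = (1/√θ)(Φ(z/σ + σ√θ/2) e^{√θ z} − Φ(z/σ − σ√θ/2)) converges pointwise for each σ > 0 to P_0(σ) = zΦ(z/σ) + σφ(z/σ), and P_0 is strictly increasing in σ on (0,∞). -/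
open Real Set Filter Topology

noncomputable def stdNormalPdf (x : ℝ) : ℝ := (Real.sqrt (2 * π))⁻¹ * Real.exp (-x^2 / 2)
noncomputable def stdNormalCdf (x : ℝ) : ℝ := ∫ t in Iic x, stdNormalPdf t

/-- Normalized Black–Scholes put price with log-moneyness `√θ z` and volatility `σ`. -/
noncomputable def bsPut (z θ σ : ℝ) : ℝ :=
  (1 / Real.sqrt θ) *
    (stdNormalCdf (z / σ + σ * Real.sqrt θ / 2) * Real.exp (Real.sqrt θ * z)
      - stdNormalCdf (z / σ - σ * Real.sqrt θ / 2))

/-- The Bachelier-type limit `P₀`. -/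
noncomputable def bsPutLimit (z σ : ℝ) : ℝ :=
  z * stdNormalCdf (z / σ) + σ * stdNormalPdf (z / σ)

open MeasureTheory ProbabilityTheory

/-! With `G(s) = Φ(z/σ + σs/2) e^{sz} - Φ(z/σ - σs/2)` we have `G 0 = 0` and `P_θ(σ) = G(√θ)/√θ`,
so `P_θ(σ) → G'(0) = P₀(σ)`. Differentiating `P₀` in `σ`, the two `z²φ(z/σ)/σ²` terms cancel
(using `φ'(x) = -x φ(x)`) and leave `∂P₀/∂σ = φ(z/σ) > 0`. -/

theorem hasDerivAt_integral_Iic {E : Type*} [NormedAddCommGroup E] [NormedSpace ℝ E]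
    [CompleteSpace E] {f : ℝ → E} (hint : Integrable f) (hcont : Continuous f)
    (x : ℝ) : HasDerivAt (fun y => ∫ t in Iic y, f t) (f x) x := by
  have hsplit : ∀ y, ∫ t in Iic y, f t = (∫ t in Iic 0, f t) + ∫ t in (0 : ℝ)..y, f t :=
    fun y => by rw [← intervalIntegral.integral_Iic_sub_Iic hint.integrableOn hint.integrableOn,
      add_sub_cancel]
  exact ((intervalIntegral.integral_hasDerivAt_right hint.intervalIntegrable
    (hcont.stronglyMeasurableAtFilter _ _) hcont.continuousAt).const_add _).congr_of_eventuallyEq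
    (.of_forall hsplit)

theorem stdNormalPdf_eq_gaussianPDFReal : stdNormalPdf = gaussianPDFReal 0 1 := by
  ext x
  simp only [stdNormalPdf, gaussianPDFReal]
  norm_num

theorem stdNormalPdf_pos (x : ℝ) : 0 < stdNormalPdf x := by
  rw [stdNormalPdf_eq_gaussianPDFReal]
  exact gaussianPDFReal_pos _ _ _ one_ne_zero

theorem hasDerivAt_stdNormalCdf (x : ℝ) : HasDerivAt stdNormalCdf (stdNormalPdf x) x :=
  hasDerivAt_integral_Iic (stdNormalPdf_eq_gaussianPDFReal ▸
    integrable_gaussianPDFReal 0 1) (by unfold stdNormalPdf; fun_prop) x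

theorem hasDerivAt_stdNormalPdf (x : ℝ) : HasDerivAt stdNormalPdf (-x * stdNormalPdf x) x := by
  have hexponent : HasDerivAt (fun y : ℝ => -y ^ 2 / 2) (-x) x := by
    simpa using ((hasDerivAt_pow 2 x).neg.div_const 2).congr_deriv (by ring)
  refine (hexponent.exp.const_mul (√(2 * π))⁻¹).congr_deriv ?_
  simp only [stdNormalPdf]
  ring

theorem tendsto_div_sqrt_of_hasDerivAt_zero {G : ℝ → ℝ} {d : ℝ} (hG : HasDerivAt G d 0)
    (hG0 : G 0 = 0) : Tendsto (fun θ => G √θ / √θ) (𝓝[>] 0) (𝓝 d) := by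
  have hsqrt : Tendsto (√·) (𝓝[>] (0 : ℝ)) (𝓝[>] 0) :=
    tendsto_nhdsWithin_iff.2
      ⟨by simpa using (continuous_sqrt.tendsto 0).mono_left nhdsWithin_le_nhds,
        eventually_nhdsWithin_of_forall fun θ hθ => sqrt_pos.2 hθ⟩
  refine (hG.tendsto_slope_zero_right.comp hsqrt).congr fun θ => ?_
  simp [hG0, div_eq_inv_mul]

theorem hasDerivAt_bsPut_numerator (z σ : ℝ) :
    HasDerivAt (fun s => stdNormalCdf (z / σ + σ * s / 2) * exp (s * z)
      - stdNormalCdf (z / σ - σ * s / 2)) (bsPutLimit z σ) 0 := by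
  have hup : HasDerivAt (fun s => z / σ + σ * s / 2) (σ / 2) 0 := by
    simpa using ((hasDerivAt_id (0 : ℝ)).const_mul σ).div_const 2 |>.const_add (z / σ)
  have hdown : HasDerivAt (fun s => z / σ - σ * s / 2) (-(σ / 2)) 0 := by
    simpa using ((hasDerivAt_id (0 : ℝ)).const_mul σ).div_const 2 |>.const_sub (z / σ)
  have hexp : HasDerivAt (fun s => exp (s * z)) z 0 := by
    simpa using ((hasDerivAt_id (0 : ℝ)).mul_const z).exp
  have h := (((hasDerivAt_stdNormalCdf _).comp 0 hup).mul hexp).sub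
    ((hasDerivAt_stdNormalCdf _).comp 0 hdown)
  refine h.congr_deriv ?_
  simp only [bsPutLimit, Function.comp_apply, mul_zero, zero_div, add_zero, sub_zero, zero_mul,
    exp_zero]
  ring

theorem hasDerivAt_bsPutLimit (z : ℝ) {σ : ℝ} (hσ : σ ≠ 0) :
    HasDerivAt (bsPutLimit z) (stdNormalPdf (z / σ)) σ := by
  have hratio : HasDerivAt (fun s => z / s) (-z / σ ^ 2) σ := by
    simpa [div_eq_mul_inv, neg_div] using (hasDerivAt_inv hσ).const_mul z
  have h := (((hasDerivAt_stdNormalCdf _).comp σ hratio).const_mul z).add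
    ((hasDerivAt_id' σ).mul ((hasDerivAt_stdNormalPdf _).comp σ hratio))
  refine h.congr_deriv ?_
  simp only [Function.comp_apply]
  field_simp
  ring

theorem strictMonoOn_bsPutLimit (z : ℝ) : StrictMonoOn (bsPutLimit z) (Ioi 0) := by
  have hderiv : ∀ σ ∈ Ioi (0 : ℝ), HasDerivAt (bsPutLimit z) (stdNormalPdf (z / σ)) σ :=
    fun σ hσ => hasDerivAt_bsPutLimit z (ne_of_gt hσ)
  refine strictMonoOn_of_hasDerivWithinAt_pos (f' := fun σ => stdNormalPdf (z / σ)) (convex_Ioi 0)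
    (fun σ hσ => (hderiv σ hσ).continuousAt.continuousWithinAt) ?_ (fun σ _ => stdNormalPdf_pos _)
  rw [interior_Ioi]
  exact fun σ hσ => (hderiv σ hσ).hasDerivWithinAt

theorem tendsto_bsPut (z σ : ℝ) :
    Tendsto (fun θ => bsPut z θ σ) (𝓝[>] 0) (𝓝 (bsPutLimit z σ)) := by
  refine (tendsto_div_sqrt_of_hasDerivAt_zero (hasDerivAt_bsPut_numerator z σ) ?_).congr
    fun θ => ?_
  · simp
  · simp only [bsPut, div_eq_inv_mul, mul_one, mul_comm (√θ) z]

theorem bsPut_tendsto_and_limit_strictMono (z : ℝ) :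
    (∀ σ : ℝ, 0 < σ →
      Tendsto (fun θ => bsPut z θ σ) (𝓝[>] 0) (𝓝 (bsPutLimit z σ))) ∧
    StrictMonoOn (fun σ => bsPutLimit z σ) (Ioi (0 : ℝ)) :=
  ⟨fun σ _ => tendsto_bsPut z σ, strictMonoOn_bsPutLimit z⟩
end
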